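/- arXiv:2302.08316 — 4 statements merged into one kernel-verified Lean document; each statement's English description precedes it below -/
import Mathlib

section
/- Let R be a commutative k-algebra such that Ω¹(R) is a finitely generated projective R-module, and let p ∈ ℕ. The R-linear map α : Λ^p_R Der_k(R) → {alternating k-multilinear maps R^p → R} determined by α(ξ_1∧…∧ξ_p)(a_1,…,a_p) = det(ξ_i(a_j))_{1≤i,j≤p} is injective and its image is exactly 𝔛^p(R); thus Λ^p_R Der_k(R) ≅ 𝔛^p(R) as R-modules. -/
/-!
Since `Ω¹(R)` is finitely generated projective and spanned by differentials, there are
`x₁, …, xₙ ∈ R` and derivations `ξ₁, …, ξₙ` with `δ b = ∑ ξᵢ(b) δ(xᵢ)` for every derivation `δ`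
(a dual basis of `Ω¹(R)` made of the `dxᵢ`). Using this in every slot, a multiderivation
expands as `F a = ∑_{i₁ < ⋯ < i_p} F(x_{i₁}, …, x_{i_p}) det (ξ_{i_r}(a_s))`, and a wedge of
derivations expands in the wedges `ξ_{i₁} ∧ ⋯ ∧ ξ_{i_p}` with the same determinants as
coefficients. Hence `β F = ∑ F(x_{i₁}, …, x_{i_p}) ξ_{i₁} ∧ ⋯ ∧ ξ_{i_p}` satisfies `β ∘ α = id`,
while `α (β F)` is a combination of determinants of derivations, hence a multiderivation, and
equals `F` when `F` is a multiderivation.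
-/

noncomputable section

/-- The wedge product `v 0 ∧ ⋯ ∧ v (n-1)`, as an element of the `n`-th exterior power. -/
def wedge {R M : Type*} [CommRing R] [AddCommGroup M] [Module R M] (n : ℕ) (v : Fin n → M) :
    ⋀[R]^n M :=
  ⟨ExteriorAlgebra.ιMulti R n v, ExteriorAlgebra.ιMulti_range R n (Set.mem_range_self v)⟩

/-- `F : R^p → M` is a `p`-fold multiderivation: alternating, `k`-multilinear and a
`k`-derivation in each argument. -/
def IsMultiDeriv (k : Type*) {R M : Type*} [CommRing k] [CommRing R] [Algebra k R]
    [AddCommGroup M] [Module R M] [Module k M] (p : ℕ) (F : (Fin p → R) → M) : Prop :=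
  (∀ (a : Fin p → R) (i : Fin p) (x y : R),
      F (Function.update a i (x + y)) = F (Function.update a i x) + F (Function.update a i y)) ∧
  (∀ (a : Fin p → R) (i : Fin p) (c : k) (x : R),
      F (Function.update a i (c • x)) = c • F (Function.update a i x)) ∧
  (∀ (a : Fin p → R) (i j : Fin p), i ≠ j → a i = a j → F a = 0) ∧
  (∀ (a : Fin p → R) (i : Fin p) (x y : R),
      F (Function.update a i (x * y)) =
        x • F (Function.update a i y) + y • F (Function.update a i x))

open Function Matrix Equiv

section Expansion

variable {R M N : Type*} [CommRing R] [AddCommGroup N] [Module R N] {n : ℕ}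

theorem eq_sum_prod_smul_of_forall_eq_sum (e : Fin n → M) (c : Fin n → M → R) {p : ℕ}
    (G : (Fin p → M) → N)
    (hG : ∀ (a : Fin p → M) (r : Fin p), G a = ∑ i, c i (a r) • G (update a r (e i)))
    (a : Fin p → M) :
    G a = ∑ m : Fin p → Fin n, (∏ r, c (m r) (a r)) • G (e ∘ m) := by
  induction p with
  | zero =>
    rw [Fintype.sum_unique, Fin.prod_univ_zero, one_smul]
    exact congrArg G (Subsingleton.elim _ _)
  | succ p ih =>
    have hcons (i : Fin n) : G (Fin.cons (e i) (Fin.tail a)) =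
        ∑ m : Fin p → Fin n, (∏ r, c (m r) (Fin.tail a r)) • G (Fin.cons (e i) (e ∘ m)) :=
      ih (fun b => G (Fin.cons (e i) b)) (fun b r => by
        simpa only [Fin.cons_succ, ← Fin.cons_update] using hG (Fin.cons (e i) b) r.succ) _
    have hupdate (i : Fin n) : update a 0 (e i) = Fin.cons (e i) (Fin.tail a) := by
      ext j
      cases j using Fin.cases <;> simp [Fin.tail]
    calc G a = ∑ i, c i (a 0) • G (Fin.cons (e i) (Fin.tail a)) := by
          simpa only [hupdate] using hG a 0
      _ = ∑ i, ∑ m : Fin p → Fin n,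
            (c i (a 0) * ∏ r, c (m r) (Fin.tail a r)) • G (Fin.cons (e i) (e ∘ m)) := by
          simp only [hcons, Finset.smul_sum, mul_smul]
      _ = ∑ m : Fin (p + 1) → Fin n, (∏ r, c (m r) (a r)) • G (e ∘ m) := by
          rw [← Fintype.sum_prod_type']
          refine Fintype.sum_equiv (Fin.consEquiv fun _ => Fin n) _ _ fun im => ?_
          simp only [Fin.consEquiv, Equiv.coe_fn_mk, Fin.comp_cons, Fin.prod_univ_succ,
            Fin.cons_zero, Fin.cons_succ]
          rfl

theorem sum_prod_smul_eq_sum_det_smul {p : ℕ} (c : Fin p → Fin n → R) (g : (Fin p → Fin n) → N)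
    (hg_zero : ∀ m, ¬ Injective m → g m = 0)
    (hg_perm : ∀ m (σ : Perm (Fin p)), g (m ∘ σ) = σ.sign • g m) :
    ∑ m, (∏ r, c r (m r)) • g m = ∑ o : Fin p ↪o Fin n, (of fun r t => c r (o t)).det • g o := by
  have hdet (o : Fin p ↪o Fin n) : (of fun r t => c r (o t)).det • g o =
      ∑ τ : Perm (Fin p), (∏ r, c r (o (τ r))) • g (o ∘ τ) := by
    rw [det_apply', Finset.sum_smul]
    refine Fintype.sum_equiv (Equiv.inv _) _ _ fun σ => ?_
    have hprod : ∏ i, c (σ i) (o i) = ∏ r, c r (o (σ⁻¹ r)) := by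
      rw [← Equiv.prod_comp σ (fun r => c r (o (σ⁻¹ r)))]
      simp
    rw [hg_perm, Units.smul_def, ← Int.cast_smul_eq_zsmul R, smul_smul, Equiv.inv_apply,
      Perm.sign_inv, mul_comm, ← hprod]
    rfl
  simp only [hdet, ← Fintype.sum_prod_type']
  symm
  -- an injective `m` is `o ∘ τ` for a unique increasing `o` (sort `m`) and permutation `τ`
  refine Finset.sum_of_injOn (fun oτ => oτ.1 ∘ oτ.2) ?_ (by simp) ?_ (by simp)
  · rintro ⟨o, τ⟩ - ⟨o', τ'⟩ - h
    have ho : o = o' := by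
      rw [← OrderEmbedding.range_inj]
      simpa [Set.range_comp] using congrArg Set.range h
    subst ho
    simpa [Equiv.ext_iff] using fun t => o.injective (congrFun h t)
  · intro m _ hm
    suffices ¬ Injective m by simp [hg_zero m this]
    intro hinj
    refine hm ⟨(OrderEmbedding.ofStrictMono _ ((Tuple.monotone_sort m).strictMono_of_injective
      (hinj.comp (Tuple.sort m).injective)), (Tuple.sort m)⁻¹), by simp, ?_⟩
    ext t
    simp

end Expansion

theorem AlternatingMap.eq_sum_det_smul {R S M N : Type*} [CommRing R] [CommRing S]
    [AddCommGroup M] [Module S M] [AddCommGroup N] [Module S N] [Module R N] {n p : ℕ}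
    (G : M [⋀^Fin p]→ₗ[S] N) (e : Fin n → M) (c : Fin n → M → R)
    (hG : ∀ (a : Fin p → M) (r : Fin p), G a = ∑ i, c i (a r) • G (update a r (e i)))
    (a : Fin p → M) :
    G a = ∑ o : Fin p ↪o Fin n, (of fun r t => c (o t) (a r)).det • G (e ∘ o) :=
  (eq_sum_prod_smul_of_forall_eq_sum e c G hG a).trans <|
    sum_prod_smul_eq_sum_det_smul (fun r i => c i (a r)) (fun m => G (e ∘ m))
      (fun _ hm => G.map_eq_zero_of_not_injective _ fun h => hm h.of_comp)
      (fun m σ => G.map_perm (e ∘ m) σ)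

theorem Module.exists_sum_dual_smul_eq_of_span_eq_top {R M : Type*} [CommRing R]
    [AddCommGroup M] [Module R M] [Module.Finite R M] [Module.Projective R M] {S : Set M}
    (hS : Submodule.span R S = ⊤) :
    ∃ (n : ℕ) (v : Fin n → M) (f : Fin n → Module.Dual R M),
      (∀ i, v i ∈ S) ∧ ∀ m, ∑ i, f i m • v i = m := by
  obtain ⟨T, hTS, hT⟩ := (Submodule.fg_span_iff_fg_span_finset_subset S).1
    (hS ▸ Module.Finite.fg_top)
  let v : Fin T.card → M := fun i => T.equivFin.symm i
  have hv : Set.range v = T := by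
    rw [show v = Subtype.val ∘ T.equivFin.symm from rfl, EquivLike.range_comp, Subtype.range_coe]
  have hsurj : Surjective (Fintype.linearCombination R v) := by
    rw [← LinearMap.range_eq_top, Fintype.range_linearCombination, hv, ← hT, hS]
  obtain ⟨s, hs⟩ := Module.projective_lifting_property _ LinearMap.id hsurj
  refine ⟨T.card, v, fun i => LinearMap.proj i ∘ₗ s, fun i => hTS (T.equivFin.symm i).2,
    fun m => ?_⟩
  simpa [Fintype.linearCombination_apply] using LinearMap.congr_fun hs m

-- The `dxᵢ` generate `Ω¹(R)`, with the `ξᵢ` as coordinate functionals.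
def IsDerivCoordinates {k R : Type*} [CommRing k] [CommRing R] [Algebra k R] {n : ℕ}
    (x : Fin n → R) (ξ : Fin n → Derivation k R R) : Prop :=
  ∀ (δ : Derivation k R R) (b : R), δ b = ∑ i, ξ i b * δ (x i)

theorem exists_derivation_eq_sum_mul (k R : Type*) [CommRing k] [CommRing R] [Algebra k R]
    [Module.Finite R Ω[R⁄k]] [Module.Projective R Ω[R⁄k]] :
    ∃ (n : ℕ) (x : Fin n → R) (ξ : Fin n → Derivation k R R), IsDerivCoordinates x ξ := by
  obtain ⟨n, v, f, hv, hf⟩ :=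
    Module.exists_sum_dual_smul_eq_of_span_eq_top (KaehlerDifferential.span_range_derivation k R)
  choose x hx using hv
  refine ⟨n, x, fun i => (f i).compDer (KaehlerDifferential.D k R), fun δ b => ?_⟩
  rw [← δ.liftKaehlerDifferential_comp_D b, ← hf (KaehlerDifferential.D k R b), map_sum]
  simp [← hx]

section MultiDeriv

variable {k R : Type*} [CommRing k] [CommRing R] [Algebra k R] {p : ℕ}

variable (k R p) in
def multiDerivSubmodule : Submodule R ((Fin p → R) → R) where
  carrier := {F | IsMultiDeriv k p F}
  zero_mem' := ⟨by simp, by simp, by simp, by simp⟩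
  add_mem' := by
    rintro F G ⟨hF₁, hF₂, hF₃, hF₄⟩ ⟨hG₁, hG₂, hG₃, hG₄⟩
    refine ⟨fun a i x y => ?_, fun a i c x => ?_, fun a i j hij h => ?_, fun a i x y => ?_⟩
    · simp only [Pi.add_apply, hF₁, hG₁]; abel
    · simp only [Pi.add_apply, hF₂, hG₂, smul_add]
    · simp only [Pi.add_apply, hF₃ a i j hij h, hG₃ a i j hij h, add_zero]
    · simp only [Pi.add_apply, hF₄, hG₄, smul_add]; abel
  smul_mem' := by
    rintro r F ⟨hF₁, hF₂, hF₃, hF₄⟩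
    refine ⟨fun a i x y => ?_, fun a i c x => ?_, fun a i j hij h => ?_, fun a i x y => ?_⟩
    · simp only [Pi.smul_apply, hF₁, smul_add]
    · simp only [Pi.smul_apply, hF₂, smul_comm r c]
    · simp only [Pi.smul_apply, hF₃ a i j hij h, smul_zero]
    · simp only [Pi.smul_apply, hF₄, smul_add, smul_comm r x, smul_comm r y]

theorem mem_multiDerivSubmodule {F : (Fin p → R) → R} :
    F ∈ multiDerivSubmodule k R p ↔ IsMultiDeriv k p F :=
  Iff.rfl

theorem isMultiDeriv_det (ζ : Fin p → Derivation k R R) :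
    IsMultiDeriv k p fun a => (of fun i j => ζ i (a j)).det := by
  have hupdate (a : Fin p → R) (t : Fin p) (b : R) :
      of (fun i j => ζ i (update a t b j)) = updateCol (of fun i j => ζ i (a j)) t (ζ · b) := by
    ext i j
    rcases eq_or_ne j t with rfl | hj <;> simp [*]
  refine ⟨fun a t x y => ?_, fun a t c x => ?_, fun a i j hij h => ?_, fun a t x y => ?_⟩
  · have hcol : (ζ · (x + y)) = (ζ · x) + (ζ · y) := by ext; simp
    simp only [hupdate, hcol, det_updateCol_add]
  · have hcol : (ζ · (c • x)) = algebraMap k R c • (ζ · x) := by ext; simp [Algebra.smul_def]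
    simp only [hupdate, hcol, det_updateCol_smul]
    exact (Algebra.smul_def c _).symm
  · exact det_zero_of_column_eq hij fun r => by simp [h]
  · have hcol : (ζ · (x * y)) = x • (ζ · y) + y • (ζ · x) := by ext; simp
    simp only [hupdate, hcol, det_updateCol_add, det_updateCol_smul, smul_eq_mul]

def IsMultiDeriv.toAlternatingMap {F : (Fin p → R) → R} (hF : IsMultiDeriv k p F) :
    R [⋀^Fin p]→ₗ[k] R where
  toFun := F
  map_update_add' := by
    intro _ a i x y
    convert hF.1 a i x y
  map_update_smul' := by
    intro _ a i c x
    convert hF.2.1 a i c x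
  map_eq_zero_of_eq' a i j h hij := hF.2.2.1 a i j hij h

theorem IsMultiDeriv.eq_sum_det_mul {n : ℕ} {x : Fin n → R} {ξ : Fin n → Derivation k R R}
    (hxξ : IsDerivCoordinates x ξ)
    {F : (Fin p → R) → R} (hF : IsMultiDeriv k p F) (a : Fin p → R) :
    F a = ∑ o : Fin p ↪o Fin n, (of fun r t => ξ (o t) (a r)).det * F (x ∘ o) := by
  refine hF.toAlternatingMap.eq_sum_det_smul x (fun i b => ξ i b) (fun a r => ?_) a
  let δ : Derivation k R R :=
    Derivation.mk' (hF.toAlternatingMap.toMultilinearMap.toLinearMap a r) (hF.2.2.2 a r)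
  have hδ (b : R) : δ b = F (update a r b) := rfl
  change F a = ∑ i, ξ i (a r) • F (update a r (x i))
  simpa [hδ] using hxξ δ (a r)

end MultiDeriv

section Coordinates

open exteriorPower

variable {k R : Type*} [CommRing k] [CommRing R] [Algebra k R] {n p : ℕ}

def wedgeExpansion (x : Fin n → R) (ξ : Fin n → Derivation k R R) (p : ℕ) :
    ((Fin p → R) → R) →ₗ[R] ⋀[R]^p (Derivation k R R) :=
  ∑ o : Fin p ↪o Fin n, (LinearMap.proj (x ∘ o)).smulRight (ιMulti R p (ξ ∘ o))

theorem wedgeExpansion_apply (x : Fin n → R) (ξ : Fin n → Derivation k R R)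
    (F : (Fin p → R) → R) :
    wedgeExpansion x ξ p F = ∑ o : Fin p ↪o Fin n, F (x ∘ o) • ιMulti R p (ξ ∘ o) := by
  simp [wedgeExpansion]

variable {x : Fin n → R} {ξ : Fin n → Derivation k R R}

theorem derivation_eq_sum_smul (hxξ : IsDerivCoordinates x ξ)
    (ζ : Derivation k R R) : ζ = ∑ i, ζ (x i) • ξ i := by
  ext b
  rw [← Derivation.coeFnAddMonoidHom_apply (∑ i, _), map_sum, hxξ ζ b]
  simp [Derivation.coeFnAddMonoidHom_apply, mul_comm]

theorem ιMulti_eq_sum_det_smul (hxξ : IsDerivCoordinates x ξ)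
    (ζ : Fin p → Derivation k R R) :
    ιMulti R p ζ =
      ∑ o : Fin p ↪o Fin n, (of fun r t => ζ r (x (o t))).det • ιMulti R p (ξ ∘ o) := by
  refine (ιMulti R p).eq_sum_det_smul ξ (fun i ζ => ζ (x i)) (fun a r => ?_) ζ
  conv_lhs => rw [← update_eq_self r a, derivation_eq_sum_smul hxξ (a r)]
  simp only [AlternatingMap.map_update_sum, AlternatingMap.map_update_smul]

theorem wedgeExpansion_comp_eq_id (hxξ : IsDerivCoordinates x ξ)
    {α : ↥(⋀[R]^p (Derivation k R R)) →ₗ[R] ((Fin p → R) → R)}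
    (hα : ∀ (ζ : Fin p → Derivation k R R) (a : Fin p → R),
      α (wedge p ζ) a = (of fun i j => ζ i (a j)).det) :
    wedgeExpansion x ξ p ∘ₗ α = LinearMap.id := by
  ext ζ
  have hwedge : ιMulti R p ζ = wedge p ζ := rfl
  simp only [LinearMap.compAlternatingMap_apply, LinearMap.comp_apply, LinearMap.id_apply,
    wedgeExpansion_apply, hwedge, hα]
  rw [← hwedge, ιMulti_eq_sum_det_smul hxξ]
  rfl

theorem apply_wedgeExpansion {α : ↥(⋀[R]^p (Derivation k R R)) →ₗ[R] ((Fin p → R) → R)}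
    (hα : ∀ (ζ : Fin p → Derivation k R R) (a : Fin p → R),
      α (wedge p ζ) a = (of fun i j => ζ i (a j)).det)
    (F : (Fin p → R) → R) :
    α (wedgeExpansion x ξ p F) =
      ∑ o : Fin p ↪o Fin n, F (x ∘ o) • fun a => (of fun i j => ξ (o i) (a j)).det := by
  simp only [wedgeExpansion_apply, map_sum, map_smul]
  exact Finset.sum_congr rfl fun o _ => congrArg (F (x ∘ o) • ·) (funext (hα (ξ ∘ o)))

theorem isMultiDeriv_apply_wedgeExpansion
    {α : ↥(⋀[R]^p (Derivation k R R)) →ₗ[R] ((Fin p → R) → R)}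
    (hα : ∀ (ζ : Fin p → Derivation k R R) (a : Fin p → R),
      α (wedge p ζ) a = (of fun i j => ζ i (a j)).det)
    (F : (Fin p → R) → R) :
    IsMultiDeriv k p (α (wedgeExpansion x ξ p F)) := by
  rw [← mem_multiDerivSubmodule, apply_wedgeExpansion hα]
  exact Submodule.sum_mem _ fun o _ => Submodule.smul_mem _ _ (isMultiDeriv_det _)

theorem apply_wedgeExpansion_of_isMultiDeriv (hxξ : IsDerivCoordinates x ξ)
    {α : ↥(⋀[R]^p (Derivation k R R)) →ₗ[R] ((Fin p → R) → R)}
    (hα : ∀ (ζ : Fin p → Derivation k R R) (a : Fin p → R),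
      α (wedge p ζ) a = (of fun i j => ζ i (a j)).det)
    {F : (Fin p → R) → R} (hF : IsMultiDeriv k p F) :
    α (wedgeExpansion x ξ p F) = F := by
  ext a
  rw [apply_wedgeExpansion hα, Finset.sum_apply, hF.eq_sum_det_mul hxξ a]
  refine Finset.sum_congr rfl fun o _ => ?_
  rw [Pi.smul_apply, smul_eq_mul, mul_comm, ← det_transpose]
  rfl

end Coordinates

/-- If `Ω¹(R)` is a finitely generated projective `R`-module, then the
`R`-linear map `α : Λ^p Der_k(R) → {maps R^p → R}` determined by
`α(ξ₁ ∧ ⋯ ∧ ξ_p)(a₁, …, a_p) = det (ξ_i (a_j))` is injective with image exactly the set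
of `p`-fold multiderivations `𝔛^p(R)`. -/
theorem statement2 (k R : Type*) [CommRing k] [CommRing R] [Algebra k R]
    [Module.Finite R (Ω[R⁄k])] [Module.Projective R (Ω[R⁄k])] (p : ℕ)
    (α : ↥(⋀[R]^p (Derivation k R R)) →ₗ[R] ((Fin p → R) → R))
    (hα : ∀ (ξ : Fin p → Derivation k R R) (a : Fin p → R),
      α (wedge p ξ) a = Matrix.det (Matrix.of fun i j => ξ i (a j))) :
    Function.Injective α ∧ Set.range α = {F | IsMultiDeriv k p F} := by
  obtain ⟨n, x, ξ, hxξ⟩ := exists_derivation_eq_sum_mul k R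
  have hleft : LeftInverse (wedgeExpansion x ξ p) α :=
    LinearMap.congr_fun (wedgeExpansion_comp_eq_id hxξ hα)
  refine ⟨hleft.injective, Set.ext fun F => ⟨?_, fun hF => ⟨wedgeExpansion x ξ p F, ?_⟩⟩⟩
  · rintro ⟨ω, rfl⟩
    rw [← hleft ω]
    exact isMultiDeriv_apply_wedgeExpansion hα _
  · exact apply_wedgeExpansion_of_isMultiDeriv hxξ hα hF
end
end

section
/- Let R be a commutative k-algebra such that Ω¹(R) is finitely generated projective with dual basis x_1,…,x_r ∈ Ω¹(R), f_1,…,f_r ∈ Hom_R(Ω¹(R),R), and assume Λ^{n+1}Ω¹(R) = 0. Then for every η ∈ Λ^nΩ¹(R), every increasing tuple 1 ≤ I_1 < … < I_n ≤ r and every 1 ≤ s ≤ r, the identity ⟨f_{I_1}∧…∧f_{I_n}, η⟩·f_s = Σ_{j=1}^n ⟨f_{I_1}∧…∧f_{I_{j−1}}∧f_s∧f_{I_{j+1}}∧…∧f_{I_n}, η⟩·f_{I_j} holds in Hom_R(Ω¹(R),R). -/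
/-!
Both sides are linear in `η`, so it suffices to take `η = ω₁ ∧ ⋯ ∧ ωₙ` and to evaluate at some
`y ∈ Ω¹(R)`. Since `Λ^{n+1}Ω¹(R) = 0`, the `(n+1) × (n+1)` determinant pairing
`f_s, f_{I_1}, …, f_{I_n}` against `y, ω₁, …, ωₙ` vanishes; its Laplace expansion along the
first column is exactly the claimed identity.
-/

noncomputable section

namespace Matrix

variable {R : Type*} [CommRing R]

theorem det_submatrix_succAbove_succ_succ_eq {n : ℕ} (A : Matrix (Fin (n + 1)) (Fin (n + 1)) R)
    (j : Fin n) :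
    (A.submatrix j.succ.succAbove Fin.succ).det =
      (-1) ^ (j : ℕ) * ((A.submatrix Fin.succ Fin.succ).updateRow j (fun k => A 0 k.succ)).det := by
  have hperm : A.submatrix j.succ.succAbove Fin.succ =
      ((A.submatrix Fin.succ Fin.succ).updateRow j (fun k => A 0 k.succ)).submatrix
        j.cycleRange.symm id := by
    cases n with
    | zero => exact j.elim0
    | succ m =>
      ext a b
      cases a using Fin.cases <;> simp [updateRow_apply, Fin.succ_succAbove_succ]
  rw [hperm, det_permute, Equiv.Perm.sign_symm, Fin.sign_cycleRange]
  simp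

theorem det_succ_eq_sub_sum_det_updateRow {n : ℕ} (A : Matrix (Fin (n + 1)) (Fin (n + 1)) R) :
    A.det = A 0 0 * (A.submatrix Fin.succ Fin.succ).det -
      ∑ j : Fin n, A j.succ 0 * ((A.submatrix Fin.succ Fin.succ).updateRow j
        (fun k => A 0 k.succ)).det := by
  rw [det_succ_column_zero, Fin.sum_univ_succ, sub_eq_add_neg, ← Finset.sum_neg_distrib]
  simp only [det_submatrix_succAbove_succ_succ_eq, Fin.succAbove_zero, Fin.val_zero, pow_zero,
    one_mul, Fin.val_succ, pow_succ]
  congr 1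
  refine Finset.sum_congr rfl fun j _ => ?_
  have hsq : (-1 : R) ^ (j : ℕ) * (-1) ^ (j : ℕ) = 1 := by rw [← mul_pow]; simp
  linear_combination (-A j.succ 0 * ((A.submatrix Fin.succ Fin.succ).updateRow j
        (fun k => A 0 k.succ)).det) * hsq

end Matrix

theorem wedge_eq_ιMulti {R M : Type*} [CommRing R] [AddCommGroup M] [Module R M] (n : ℕ) :
    (wedge n : (Fin n → M) → ⋀[R]^n M) = exteriorPower.ιMulti R n :=
  rfl

namespace exteriorPower

variable {R M : Type*} [CommRing R] [AddCommGroup M] [Module R M]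

theorem det_eq_zero_of_eq_bot {m : ℕ} (h : ⋀[R]^m M = ⊥) (g : Fin m → Module.Dual R M)
    (v : Fin m → M) : (Matrix.of fun i j => g i (v j)).det = 0 := by
  have hv : ιMulti R m v = 0 := Subtype.ext (by simpa [h] using (ιMulti R m v).2)
  have hdet := alternatingMapToDual_apply_ιMulti g v
  rw [hv, map_zero] at hdet
  rw [← Matrix.det_transpose]
  exact hdet.symm

theorem det_mul_apply_eq_sum_det_update_mul {n : ℕ} (hvanish : ⋀[R]^(n + 1) M = ⊥)
    (g : Fin n → Module.Dual R M) (h : Module.Dual R M) (ω : Fin n → M) (y : M) :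
    (Matrix.of fun i j => g i (ω j)).det * h y =
      ∑ j, (Matrix.of fun i k => Function.update g j h i (ω k)).det * g j y := by
  have hzero := det_eq_zero_of_eq_bot hvanish (Fin.cons h g) (Fin.cons y ω : Fin (n + 1) → M)
  rw [Matrix.det_succ_eq_sub_sum_det_updateRow] at hzero
  have hminor : (Matrix.of fun i j => (Fin.cons h g : Fin (n + 1) → Module.Dual R M) i
      ((Fin.cons y ω : Fin (n + 1) → M) j)).submatrix Fin.succ Fin.succ =
        Matrix.of fun i j => g i (ω j) := by
    ext; simp
  have hupdate (j : Fin n) : (Matrix.of fun i k => g i (ω k)).updateRow j (fun k => h (ω k)) =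
      Matrix.of fun i k => Function.update g j h i (ω k) := by
    ext i k
    rcases eq_or_ne i j with rfl | hij
    · simp [Matrix.updateRow_apply]
    · simp [Matrix.updateRow_apply, hij]
  simp only [hminor, hupdate, Matrix.of_apply, Fin.cons_zero, Fin.cons_succ, sub_eq_zero] at hzero
  rw [mul_comm, hzero]
  exact Finset.sum_congr rfl fun j _ => mul_comm _ _

end exteriorPower

theorem statement5_general (k R : Type*) [CommRing k] [CommRing R] [Algebra k R]
    (r : ℕ) (f : Fin r → (Ω[R⁄k] →ₗ[R] R))
    (n : ℕ) (hvanish : ⋀[R]^(n + 1) (Ω[R⁄k]) = ⊥)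
    -- the determinant pairing `⟨g₁ ∧ ⋯ ∧ g_n, -⟩ ∈ Hom_R(Λ^n Ω¹(R), R)`
    (Φ : (Fin n → (Ω[R⁄k] →ₗ[R] R)) → (↥(⋀[R]^n (Ω[R⁄k])) →ₗ[R] R))
    (hΦ : ∀ (g : Fin n → (Ω[R⁄k] →ₗ[R] R)) (ω : Fin n → Ω[R⁄k]),
      Φ g (wedge n ω) = Matrix.det (Matrix.of fun i j => g i (ω j))) :
    ∀ (η : ↥(⋀[R]^n (Ω[R⁄k]))) (I : Fin n → Fin r), StrictMono I → ∀ s : Fin r,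
      Φ (fun t => f (I t)) η • f s =
        ∑ j : Fin n, Φ (Function.update (fun t => f (I t)) j (f s)) η • f (I j) := by
  intro η I _ s
  have key : (Φ fun t => f (I t)).smulRight (f s) =
      ∑ j, (Φ (Function.update (fun t => f (I t)) j (f s))).smulRight (f (I j)) := by
    refine exteriorPower.linearMap_ext (AlternatingMap.ext fun ω => LinearMap.ext fun y => ?_)
    simp only [LinearMap.compAlternatingMap_apply, LinearMap.smulRight_apply, LinearMap.sum_apply,
      LinearMap.smul_apply, smul_eq_mul, ← wedge_eq_ιMulti, hΦ]
    exact exteriorPower.det_mul_apply_eq_sum_det_update_mul hvanish _ _ ω y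
  simpa using LinearMap.congr_fun key η

/-- Let `Ω¹(R)` be finitely generated projective with dual basis
`x₁, …, x_r`, `f₁, …, f_r`, and assume `Λ^{n+1} Ω¹(R) = 0`. Then for every `η ∈ Λ^n Ω¹(R)`,
every increasing tuple `I` and every `s`,
`⟨f_{I₁} ∧ ⋯ ∧ f_{I_n}, η⟩ • f_s = Σ_j ⟨f_{I₁} ∧ ⋯ f_s ⋯ ∧ f_{I_n}, η⟩ • f_{I_j}`
holds in `Hom_R(Ω¹(R), R)`, where `⟨g₁ ∧ ⋯ ∧ g_n, η⟩` denotes the determinant pairing. -/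
theorem statement5 (k R : Type*) [CommRing k] [CommRing R] [Algebra k R]
    (r : ℕ) (x : Fin r → Ω[R⁄k]) (f : Fin r → (Ω[R⁄k] →ₗ[R] R))
    (hdual : ∀ y : Ω[R⁄k], ∑ i : Fin r, f i y • x i = y)
    (n : ℕ) (hvanish : ⋀[R]^(n + 1) (Ω[R⁄k]) = ⊥)
    -- the determinant pairing `⟨g₁ ∧ ⋯ ∧ g_n, -⟩ ∈ Hom_R(Λ^n Ω¹(R), R)`
    (Φ : (Fin n → (Ω[R⁄k] →ₗ[R] R)) → (↥(⋀[R]^n (Ω[R⁄k])) →ₗ[R] R))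
    (hΦ : ∀ (g : Fin n → (Ω[R⁄k] →ₗ[R] R)) (ω : Fin n → Ω[R⁄k]),
      Φ g (wedge n ω) = Matrix.det (Matrix.of fun i j => g i (ω j))) :
    ∀ (η : ↥(⋀[R]^n (Ω[R⁄k]))) (I : Fin n → Fin r), StrictMono I → ∀ s : Fin r,
      Φ (fun t => f (I t)) η • f s =
        ∑ j : Fin n, Φ (Function.update (fun t => f (I t)) j (f s)) η • f (I j) :=
  statement5_general k R r f n hvanish Φ hΦ
end
end

section
/- Let R be a commutative k-algebra with Λ^{n+1}Ω¹(R) = 0, and suppose Ω¹(R) is finitely generated projective with dual basis x_1,…,x_r ∈ Ω¹(R), f_1,…,f_r ∈ Hom_R(Ω¹(R),R). Then for every F ∈ Hom_R(Ω¹(R),R), every a ∈ R and every increasing tuple 1 ≤ I_1 < … < I_n ≤ r: F(da)·(x_{I_1}∧…∧x_{I_n}) = Σ_{j=1}^n (−1)^{j−1} F(x_{I_j})·(da ∧ x_{I_1}∧…∧x_{I_{j−1}}∧x_{I_{j+1}}∧…∧x_{I_n}) in Λ^nΩ¹(R). -/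
/-!
Contracting a wedge `v₀ ∧ ⋯ ∧ vₙ` with a linear form `F` gives
`Σ_j (-1)^j F(v_j) · v₀ ∧ ⋯ v̂_j ⋯ ∧ vₙ`. Applied to `da ∧ x_{I₁} ∧ ⋯ ∧ x_{Iₙ}`, which vanishes
because `Λ^{n+1}Ω¹(R) = 0`, the `j = 0` term `F(da) · x_I` must cancel the remaining ones,
and that is the claimed identity.
-/

noncomputable section

open ExteriorAlgebra CliffordAlgebra

section
variable {R M : Type*} [CommRing R] [AddCommGroup M] [Module R M]

lemma Fin.removeNth_succ_cons {β : Type*} {n : ℕ} (x : β) (p : Fin (n + 1) → β)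
    (i : Fin (n + 1)) :
    i.succ.removeNth (Fin.cons x p : Fin (n + 2) → β) =
      (Fin.cons x (i.removeNth p) : Fin (n + 1) → β) :=
  Fin.cons_comp_succ_succAbove x p i

lemma ιMulti_removeNth_succ {n : ℕ} (v : Fin (n + 2) → M) (j : Fin (n + 1)) :
    ιMulti R (n + 1) (j.succ.removeNth v) = ι R (v 0) * ιMulti R n (j.removeNth (Fin.tail v)) := by
  rw [← Fin.cons_self_tail v, Fin.removeNth_succ_cons, ιMulti_succ_apply]
  rfl

theorem contractLeft_ιMulti_succ (d : Module.Dual R M) (n : ℕ) (v : Fin (n + 1) → M) :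
    contractLeft (Q := 0) d (ιMulti R (n + 1) v) =
      ∑ j : Fin (n + 1), (-1 : ℤ) ^ (j : ℕ) • d (v j) • ιMulti R n (j.removeNth v) := by
  induction n with
  | zero =>
    simp [ιMulti_succ_apply, ιMulti_zero_apply, Algebra.algebraMap_eq_smul_one]
  | succ n ih =>
    rw [Fin.sum_univ_succ, ιMulti_succ_apply, contractLeft_ι_mul, Matrix.vecTail, ih,
      Finset.mul_sum, sub_eq_add_neg, ← Finset.sum_neg_distrib]
    congr 1
    · rw [Fin.val_zero, pow_zero, one_smul, Fin.removeNth_zero]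
      rfl
    · refine Finset.sum_congr rfl fun j _ => ?_
      rw [ιMulti_removeNth_succ, Fin.val_succ, pow_succ, mul_neg_one, neg_smul,
        mul_smul_comm, mul_smul_comm]
      rfl

theorem smul_wedge_eq_sum_of_exteriorPower_eq_bot {n : ℕ} (hvanish : ⋀[R]^(n + 2) M = ⊥)
    (d : Module.Dual R M) (u : M) (v : Fin (n + 1) → M) :
    d u • wedge (R := R) (n + 1) v =
      ∑ j : Fin (n + 1), (-1 : ℤ) ^ (j : ℕ) •
        d (v j) • wedge (R := R) (n + 1) (Fin.cons u (j.removeNth v)) := by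
  have hzero : ιMulti R (n + 2) (Fin.cons u v) = 0 := by
    simpa [hvanish] using
      ιMulti_range R (n + 2) (Set.mem_range_self (Fin.cons u v : Fin (n + 2) → M))
  have h := contractLeft_ιMulti_succ d (n + 1) (Fin.cons u v)
  rw [hzero, map_zero, Fin.sum_univ_succ] at h
  simp only [Fin.val_zero, pow_zero, one_smul, Fin.cons_zero, Fin.cons_succ, Fin.val_succ,
    pow_succ, mul_neg_one, neg_smul, Finset.sum_neg_distrib, Fin.removeNth_zero, Fin.tail_cons,
    Fin.removeNth_succ_cons] at h
  apply Subtype.ext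
  push_cast [wedge]
  rw [← sub_eq_zero, sub_eq_add_neg]
  exact h.symm

end

theorem statement6_general (k R : Type*) [CommRing k] [CommRing R] [Algebra k R]
    (m : ℕ) (hvanish : ⋀[R]^(m + 2) (Ω[R⁄k]) = ⊥)
    (r : ℕ) (x : Fin r → Ω[R⁄k]) :
    ∀ (F : Ω[R⁄k] →ₗ[R] R) (a : R) (I : Fin (m + 1) → Fin r), StrictMono I →
      F (KaehlerDifferential.D k R a) • wedge (R := R) (m + 1) (fun i => x (I i)) =
        ∑ j : Fin (m + 1), (-1 : ℤ) ^ (j : ℕ) •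
          (F (x (I j)) •
            wedge (R := R) (m + 1)
              (Fin.cons (KaehlerDifferential.D k R a) fun l : Fin m => x (I (j.succAbove l)))) :=
  fun F a I _ =>
    smul_wedge_eq_sum_of_exteriorPower_eq_bot hvanish F (KaehlerDifferential.D k R a) (x ∘ I)

/-- Let `Λ^{n+1} Ω¹(R) = 0` (here with `n = m + 1`), and `Ω¹(R)` finitely
generated projective with dual basis `x₁, …, x_r`, `f₁, …, f_r`. Then for every
`F ∈ Hom_R(Ω¹(R), R)`, every `a ∈ R` and every increasing tuple `I`:
`F(da) • (x_{I₁} ∧ ⋯ ∧ x_{I_n}) =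
  Σ_j (−1)^{j−1} F(x_{I_j}) • (da ∧ x_{I₁} ∧ ⋯ (omit x_{I_j}) ⋯ ∧ x_{I_n})`. -/
theorem statement6 (k R : Type*) [CommRing k] [CommRing R] [Algebra k R]
    (m : ℕ) (hvanish : ⋀[R]^(m + 2) (Ω[R⁄k]) = ⊥)
    (r : ℕ) (x : Fin r → Ω[R⁄k]) (f : Fin r → (Ω[R⁄k] →ₗ[R] R))
    (hdual : ∀ y : Ω[R⁄k], ∑ i : Fin r, f i y • x i = y) :
    ∀ (F : Ω[R⁄k] →ₗ[R] R) (a : R) (I : Fin (m + 1) → Fin r), StrictMono I →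
      F (KaehlerDifferential.D k R a) • wedge (R := R) (m + 1) (fun i => x (I i)) =
        ∑ j : Fin (m + 1), (-1 : ℤ) ^ (j : ℕ) •
          (F (x (I j)) •
            wedge (R := R) (m + 1)
              (Fin.cons (KaehlerDifferential.D k R a) fun l : Fin m => x (I (j.succAbove l)))) :=
  statement6_general k R m hvanish r x
end
end

section
/- Let R be a commutative k-algebra such that Ω¹(R) is finitely generated projective, Λ^{n+1}Ω¹(R) = 0, and Λ^nΩ¹(R) ≅ R as R-modules. Then for every dual basis x_1,…,x_r ∈ Ω¹(R), f_1,…,f_r ∈ Hom_R(Ω¹(R),R) of Ω¹(R), one has Σ_{i=1}^r f_i(x_i) = n·1_R. -/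
/-!
Contracting with the dual basis and wedging back, `v ↦ Σᵢ ι(xᵢ) ∧ (fᵢ ⌋ v)`, is the Euler
operator: it multiplies `⋀^q M` by `q`. For `v ∈ ⋀^n Ω¹` the product `ι(xᵢ) ∧ v` lies in
`⋀^{n+1} Ω¹ = 0`, and the derivation rule for `fᵢ ⌋ (ι(xᵢ) ∧ v)` turns this into
`(Σᵢ fᵢ(xᵢ)) v = n v`. Taking for `v` a generator of `⋀^n Ω¹ ≅ R` gives `Σᵢ fᵢ(xᵢ) = n`.
-/

open ExteriorAlgebra CliffordAlgebra

section DualBasis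

variable {R M : Type*} [CommRing R] [AddCommGroup M] [Module R M]
  {r : ℕ} {x : Fin r → M} {f : Fin r → (M →ₗ[R] R)}

theorem sum_smul_ι_of_dual_basis (hdual : ∀ y : M, ∑ i, f i y • x i = y) (a : M) :
    ∑ i, f i a • ι R (x i) = ι R a := by
  simp_rw [← LinearMap.map_smul, ← map_sum, hdual]

theorem sum_ι_mul_contractLeft_eq_nsmul (hdual : ∀ y : M, ∑ i, f i y • x i = y)
    {q : ℕ} {v : ExteriorAlgebra R M} (hv : v ∈ ⋀[R]^q M) :
    ∑ i, ι R (x i) * contractLeft (f i) v = q • v := by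
  induction hv using Submodule.pow_induction_on_left' with
  | algebraMap c => simp [contractLeft_algebraMap]
  | add v w q _ _ hv hw => simp only [map_add, mul_add, Finset.sum_add_distrib, hv, hw, smul_add]
  | mem_mul m hm q v _ ih =>
    obtain ⟨a, rfl⟩ := hm
    have hterm (i : Fin r) : ι R (x i) * contractLeft (f i) (ι R a * v)
        = f i a • (ι R (x i) * v) + ι R a * (ι R (x i) * contractLeft (f i) v) := by
      rw [contractLeft_ι_mul, mul_sub, mul_smul_comm, ← mul_assoc, ← mul_assoc,
        eq_neg_of_add_eq_zero_left (ι_add_mul_swap (x i) a), neg_mul, sub_neg_eq_add]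
    have hexpand : ∑ i, f i a • (ι R (x i) * v) = ι R a * v := by
      simp_rw [← sum_smul_ι_of_dual_basis hdual a, Finset.sum_mul, smul_mul_assoc]
    rw [Finset.sum_congr rfl fun i _ ↦ hterm i, Finset.sum_add_distrib, ← Finset.mul_sum, ih,
      hexpand, mul_smul_comm, succ_nsmul']

theorem sum_apply_smul_eq_nsmul_of_exteriorPower_succ_eq_bot
    (hdual : ∀ y : M, ∑ i, f i y • x i = y) {q : ℕ} (hvanish : ⋀[R]^(q + 1) M = ⊥)
    {v : ExteriorAlgebra R M} (hv : v ∈ ⋀[R]^q M) :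
    (∑ i, f i (x i)) • v = q • v := by
  have hwedge (i : Fin r) : ι R (x i) * v = 0 := by
    have hmem : ι R (x i) * v ∈ ⋀[R]^(q + 1) M :=
      (pow_succ' (LinearMap.range (ι R : M →ₗ[R] ExteriorAlgebra R M)) q).ge
        (Submodule.mul_mem_mul (LinearMap.mem_range_self _ _) hv)
    simpa [hvanish] using hmem
  calc (∑ i, f i (x i)) • v
      = ∑ i, contractLeft (f i) (ι R (x i) * v) + ∑ i, ι R (x i) * contractLeft (f i) v := by
        simp_rw [contractLeft_ι_mul, Finset.sum_sub_distrib, Finset.sum_smul, sub_add_cancel]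
    _ = q • v := by simp [hwedge, sum_ι_mul_contractLeft_eq_nsmul hdual hv]

end DualBasis

theorem statement8_general (k R : Type*) [CommRing k] [CommRing R] [Algebra k R]
    (n : ℕ) (hvanish : ⋀[R]^(n + 1) (Ω[R⁄k]) = ⊥)
    (htriv : Nonempty (↥(⋀[R]^n (Ω[R⁄k])) ≃ₗ[R] R))
    (r : ℕ) (x : Fin r → Ω[R⁄k]) (f : Fin r → (Ω[R⁄k] →ₗ[R] R))
    (hdual : ∀ y : Ω[R⁄k], ∑ i : Fin r, f i y • x i = y) :
    ∑ i : Fin r, f i (x i) = (n : R) := by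
  obtain ⟨e⟩ := htriv
  have hgen : (∑ i, f i (x i)) • e.symm 1 = (n : R) • e.symm 1 := by
    ext
    rw [SetLike.val_smul, SetLike.val_smul, Nat.cast_smul_eq_nsmul]
    exact sum_apply_smul_eq_nsmul_of_exteriorPower_succ_eq_bot hdual hvanish (e.symm 1).2
  simpa using congrArg e hgen

/-- If `Ω¹(R)` is finitely generated projective, `Λ^{n+1} Ω¹(R) = 0` and
`Λ^n Ω¹(R) ≅ R` as `R`-modules, then any dual basis `x₁, …, x_r`, `f₁, …, f_r` of `Ω¹(R)`
satisfies `Σ_i f_i(x_i) = n · 1`. -/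
theorem statement8 (k R : Type*) [CommRing k] [CommRing R] [Algebra k R]
    [Module.Finite R (Ω[R⁄k])] [Module.Projective R (Ω[R⁄k])]
    (n : ℕ) (hvanish : ⋀[R]^(n + 1) (Ω[R⁄k]) = ⊥)
    (htriv : Nonempty (↥(⋀[R]^n (Ω[R⁄k])) ≃ₗ[R] R))
    (r : ℕ) (x : Fin r → Ω[R⁄k]) (f : Fin r → (Ω[R⁄k] →ₗ[R] R))
    (hdual : ∀ y : Ω[R⁄k], ∑ i : Fin r, f i y • x i = y) :
    ∑ i : Fin r, f i (x i) = (n : R) :=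
  statement8_general k R n hvanish htriv r x f hdual
end
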